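/- arXiv:1511.04400 — 2 statements merged into one kernel-verified Lean document; each statement's English description precedes it below -/
import Mathlib

section
/- Let Y be a Banach space, M ⊆ Y a closed subspace, and y₀ ∈ M a best approximation of y ∈ Y in M. Then ‖y₀‖ ≤ (1 + C_AO(Y))‖y‖, where C_AO(Y) ∈ [0,1] is the asymmetric-orthogonality constant of Y. -/
/-!
Put `z = y - y₀`. Since `y₀` is a best approximation, `z` is Birkhoff-orthogonal to `M`, so
Hahn–Banach gives `z* ∈ J(z)` vanishing on `M`, in particular on `-y₀`: thus `(-y₀, z) ∈ O_Y`.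
For `w* ∈ J(-y₀)` this gives
`‖y₀‖² = ⟨w*, -y₀⟩ = ⟨w*, z⟩ - ⟨w*, y⟩ ≤ C_AO(Y) ‖z‖ ‖y₀‖ + ‖y₀‖ ‖y‖`,
and `‖z‖ ≤ ‖y‖` because `0 ∈ M`.
-/

/-- The duality mapping `J_Y(w) = {w* ∈ Y* : ⟨w*, w⟩ = ‖w‖² = ‖w*‖²}`. -/
def dualitySet {Y : Type*} [NormedAddCommGroup Y] [NormedSpace ℝ Y] (w : Y) :
    Set (Y →L[ℝ] ℝ) :=
  {f | f w = ‖w‖ ^ 2 ∧ ‖w‖ ^ 2 = ‖f‖ ^ 2}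

/-- The asymmetric-orthogonality constant
`C_AO(Y) = sup { ⟨z₀*, z⟩/(‖z‖‖z₀‖) : (z₀, z) ∈ O_Y, z₀* ∈ J_Y(z₀) }`, where
`O_Y = {(z₀, z) : ∃ z* ∈ J_Y(z), ⟨z*, z₀⟩ = 0}`. -/
noncomputable def CAO (Y : Type*) [NormedAddCommGroup Y] [NormedSpace ℝ Y] : ℝ :=
  sSup {r : ℝ | ∃ (z₀ z : Y) (z₀s : Y →L[ℝ] ℝ),
    (∃ zs : Y →L[ℝ] ℝ, zs ∈ dualitySet z ∧ zs z₀ = 0) ∧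
    z₀s ∈ dualitySet z₀ ∧ r = z₀s z / (‖z‖ * ‖z₀‖)}

section DualityMapping

variable {Y : Type*} [NormedAddCommGroup Y] [NormedSpace ℝ Y]

lemma norm_eq_of_mem_dualitySet {w : Y} {f : Y →L[ℝ] ℝ} (hf : f ∈ dualitySet w) :
    ‖f‖ = ‖w‖ :=
  (pow_left_inj₀ (norm_nonneg f) (norm_nonneg w) two_ne_zero).1 hf.2.symm

lemma smul_mem_dualitySet {w : Y} {g : Y →L[ℝ] ℝ} (hg : ‖g‖ ≤ 1) (hgw : g w = ‖w‖) :
    ‖w‖ • g ∈ dualitySet w := by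
  refine ⟨by simp [hgw, sq], ?_⟩
  rw [norm_smul, norm_norm]
  rcases (norm_nonneg w).eq_or_lt with hw | hw
  · simp [← hw]
  have hg_ge : 1 ≤ ‖g‖ := by
    refine le_of_mul_le_mul_right ?_ hw
    calc 1 * ‖w‖ = g w := by rw [hgw, one_mul]
      _ ≤ ‖g‖ * ‖w‖ := le_of_abs_le (g.le_opNorm w)
  rw [le_antisymm hg hg_ge, mul_one]

/-- Hahn–Banach on the seminormed quotient `Y ⧸ M`, in which `z` keeps its norm. -/
theorem exists_mem_dualitySet_forall_mem_eq_zero (M : Submodule ℝ Y) {z : Y}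
    (hz : ∀ m ∈ M, ‖z‖ ≤ ‖z - m‖) : ∃ f ∈ dualitySet z, ∀ m ∈ M, f m = 0 := by
  have hq : ‖(Submodule.Quotient.mk z : Y ⧸ M)‖ = ‖z‖ := by
    refine le_antisymm (Submodule.Quotient.norm_mk_le M z) (QuotientAddGroup.le_norm_iff.2 ?_)
    intro m hm
    have hzm : z - m ∈ M := by
      simpa using M.neg_mem ((Submodule.Quotient.eq M).1 hm)
    simpa using hz _ hzm
  obtain ⟨g, hg, hgz⟩ := exists_dual_vector'' ℝ (M.mkQ z)
  have hgq : ‖g.comp M.mkQL‖ ≤ 1 := by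
    refine ContinuousLinearMap.opNorm_le_bound _ zero_le_one fun x => ?_
    calc ‖g (M.mkQ x)‖ ≤ ‖g‖ * ‖M.mkQ x‖ := g.le_opNorm _
      _ ≤ 1 * ‖x‖ := mul_le_mul hg (Submodule.Quotient.norm_mk_le M x) (norm_nonneg _) zero_le_one
  refine ⟨‖z‖ • g.comp M.mkQL, smul_mem_dualitySet hgq ?_, fun m hm => ?_⟩
  · simpa [hq] using hgz
  · simp [(Submodule.Quotient.mk_eq_zero M).2 hm]

lemma exists_mem_dualitySet (w : Y) : ∃ f, f ∈ dualitySet w := by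
  obtain ⟨f, hf, -⟩ := exists_mem_dualitySet_forall_mem_eq_zero ⊥ (z := w) (by simp)
  exact ⟨f, hf⟩

end DualityMapping

section AsymmetricOrthogonality

variable {Y : Type*} [NormedAddCommGroup Y] [NormedSpace ℝ Y]

lemma apply_le_norm_mul_of_mem_dualitySet {w : Y} {f : Y →L[ℝ] ℝ} (hf : f ∈ dualitySet w)
    (x : Y) : f x ≤ ‖x‖ * ‖w‖ := by
  simpa [norm_eq_of_mem_dualitySet hf, mul_comm] using le_of_abs_le (f.le_opNorm x)

variable (Y) in
def aoRatios : Set ℝ :=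
  {r : ℝ | ∃ (z₀ z : Y) (z₀s : Y →L[ℝ] ℝ),
    (∃ zs : Y →L[ℝ] ℝ, zs ∈ dualitySet z ∧ zs z₀ = 0) ∧
    z₀s ∈ dualitySet z₀ ∧ r = z₀s z / (‖z‖ * ‖z₀‖)}

lemma aoRatios_bddAbove : BddAbove (aoRatios Y) := by
  refine ⟨1, ?_⟩
  rintro r ⟨z₀, z, z₀s, -, hz₀s, rfl⟩
  refine div_le_one_of_le₀ ?_ (by positivity)
  exact apply_le_norm_mul_of_mem_dualitySet hz₀s z

lemma zero_mem_aoRatios : (0 : ℝ) ∈ aoRatios Y :=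
  ⟨0, 0, 0, ⟨0, by simp [dualitySet]⟩, by simp [dualitySet], by simp⟩

lemma CAO_nonneg : 0 ≤ CAO Y :=
  le_csSup aoRatios_bddAbove zero_mem_aoRatios

lemma apply_le_CAO_mul {z₀ z : Y} {zs z₀s : Y →L[ℝ] ℝ} (hzs : zs ∈ dualitySet z)
    (hzs₀ : zs z₀ = 0) (hz₀s : z₀s ∈ dualitySet z₀) :
    z₀s z ≤ CAO Y * (‖z‖ * ‖z₀‖) := by
  rcases (by positivity : 0 ≤ ‖z‖ * ‖z₀‖).eq_or_lt with h0 | hpos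
  · simpa [← h0] using apply_le_norm_mul_of_mem_dualitySet hz₀s z
  · rw [← div_le_iff₀ hpos]
    exact le_csSup aoRatios_bddAbove ⟨z₀, z, z₀s, ⟨zs, hzs, hzs₀⟩, hz₀s, rfl⟩

lemma norm_le_norm_sub_add_CAO_mul {x z : Y} {zs : Y →L[ℝ] ℝ} (hzs : zs ∈ dualitySet z)
    (hzsx : zs x = 0) : ‖x‖ ≤ ‖z - x‖ + CAO Y * ‖z‖ := by
  obtain ⟨f, hf⟩ := exists_mem_dualitySet x
  have key : ‖x‖ * ‖x‖ ≤ ‖x‖ * (‖z - x‖ + CAO Y * ‖z‖) :=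
    calc ‖x‖ * ‖x‖ = f z + f (x - z) := by rw [map_sub, hf.1, sq]; ring
      _ ≤ CAO Y * (‖z‖ * ‖x‖) + ‖x - z‖ * ‖x‖ :=
          add_le_add (apply_le_CAO_mul hzs hzsx hf) (apply_le_norm_mul_of_mem_dualitySet hf _)
      _ = ‖x‖ * (‖z - x‖ + CAO Y * ‖z‖) := by rw [norm_sub_rev]; ring
  rcases (norm_nonneg x).eq_or_lt with h0 | hpos
  · rw [← h0]; exact add_nonneg (norm_nonneg _) (mul_nonneg CAO_nonneg (norm_nonneg z))
  · exact le_of_mul_le_mul_left key hpos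

end AsymmetricOrthogonality

theorem stmt15_general {Y : Type*} [NormedAddCommGroup Y] [NormedSpace ℝ Y]
    (M : Submodule ℝ Y) (y : Y) (y₀ : Y) (hy₀ : y₀ ∈ M)
    (hbest : ∀ z ∈ M, ‖y - y₀‖ ≤ ‖y - z‖) :
    ‖y₀‖ ≤ (1 + CAO Y) * ‖y‖ := by
  set z := y - y₀ with hz
  have hz_orth : ∀ m ∈ M, ‖z‖ ≤ ‖z - m‖ := fun m hm => by
    simpa [hz, sub_sub] using hbest (y₀ + m) (M.add_mem hy₀ hm)
  have hzy : ‖z‖ ≤ ‖y‖ := by simpa using hbest 0 M.zero_mem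
  obtain ⟨zs, hzs, hzsM⟩ := exists_mem_dualitySet_forall_mem_eq_zero M hz_orth
  calc ‖y₀‖ = ‖-y₀‖ := (norm_neg y₀).symm
    _ ≤ ‖z - -y₀‖ + CAO Y * ‖z‖ :=
        norm_le_norm_sub_add_CAO_mul hzs (by simp [hzsM y₀ hy₀])
    _ ≤ ‖y‖ + CAO Y * ‖y‖ := by
        rw [hz, sub_neg_eq_add, sub_add_cancel]
        gcongr
        exact CAO_nonneg
    _ = (1 + CAO Y) * ‖y‖ := by ring

/-- Let `Y` be a Banach space, `M ⊆ Y` a closed subspace and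
`y₀ ∈ M` a best approximation of `y` in `M`.  Then `‖y₀‖ ≤ (1 + C_AO(Y))‖y‖`. -/
theorem stmt15 {Y : Type*} [NormedAddCommGroup Y] [NormedSpace ℝ Y] [CompleteSpace Y]
    (M : Submodule ℝ Y) (hM : IsClosed (M : Set Y)) (y : Y) (y₀ : Y) (hy₀ : y₀ ∈ M)
    (hbest : ∀ z ∈ M, ‖y - y₀‖ ≤ ‖y - z‖) :
    ‖y₀‖ ≤ (1 + CAO Y) * ‖y‖ :=
  stmt15_general M y y₀ hy₀ hbest
end

section
/- Let 1 < ρ < ∞, σ = ρ/(ρ-1), and I = (0,1). For every w ∈ W₀^{1,ρ}(I), sup over nonzero v ∈ W₀^{1,σ}(I) of ⟨w', v'⟩ / ‖v'‖_{L^σ} is at least (1/2)‖w'‖_{L^ρ}. In particular, the 1-D Laplace operator from W₀^{1,ρ}(0,1) to the dual of W₀^{1,σ}(0,1) is bounded below with constant 1/2. -/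
open MeasureTheory ENNReal

/-!
Since `w 0 = w 1 = 0`, the derivative `g` has mean zero. Test it against `h = J g - ⨍ J g`, where
`J x = x |x|^(ρ-2)` is the duality map of `L^ρ`: then `∫ g h = ∫ g J g = ‖g‖_ρ^ρ`, while
`‖h‖_σ ≤ 2 ‖J g‖_σ = 2 ‖g‖_ρ^(ρ-1)`, since subtracting the mean at most doubles an `L^σ` norm on a
probability space. The quotient is therefore at least `‖g‖_ρ / 2`.
-/

noncomputable def dualPow (ρ x : ℝ) : ℝ := x * |x| ^ (ρ - 2)

theorem abs_dualPow {ρ : ℝ} (hρ : ρ ≠ 1) (x : ℝ) : |dualPow ρ x| = |x| ^ (ρ - 1) := by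
  rcases eq_or_ne x 0 with rfl | hx
  · simp [dualPow, Real.zero_rpow (sub_ne_zero.2 hρ)]
  · rw [dualPow, abs_mul, abs_of_nonneg (Real.rpow_nonneg (abs_nonneg x) _),
      show ρ - 1 = ρ - 2 + 1 by ring, Real.rpow_add_one (abs_ne_zero.2 hx), mul_comm]

theorem mul_dualPow {ρ : ℝ} (hρ : ρ ≠ 0) (x : ℝ) : x * dualPow ρ x = |x| ^ ρ := by
  rcases eq_or_ne x 0 with rfl | hx
  · simp [dualPow, Real.zero_rpow hρ]
  · rw [dualPow, ← mul_assoc, ← abs_mul_self, abs_mul, show ρ = ρ - 2 + 1 + 1 by ring,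
      Real.rpow_add_one (abs_ne_zero.2 hx), Real.rpow_add_one (abs_ne_zero.2 hx)]
    ring_nf

theorem measurable_dualPow (ρ : ℝ) : Measurable (dualPow ρ) := by
  unfold dualPow; fun_prop

theorem ofReal_half_mul_eq_rpow_div {N : ℝ≥0∞} (hN : N ≠ 0) (hNtop : N ≠ ∞) (ρ : ℝ) :
    ENNReal.ofReal (1 / 2) * N = N ^ ρ / (2 * N ^ (ρ - 1)) := by
  have hM : N ^ (ρ - 1) ≠ 0 := (ENNReal.rpow_pos (pos_iff_ne_zero.2 hN) hNtop).ne'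
  have hMtop : N ^ (ρ - 1) ≠ ∞ := ENNReal.rpow_ne_top_of_ne_zero hN hNtop
  rw [← sub_add_cancel ρ 1, ENNReal.rpow_add _ _ hN hNtop, ENNReal.rpow_one, add_sub_cancel_right,
    mul_comm (N ^ (ρ - 1)), ENNReal.mul_div_mul_right _ _ hM hMtop, ENNReal.div_eq_inv_mul, one_div,
    ENNReal.ofReal_inv_of_pos two_pos, ENNReal.ofReal_ofNat]

section

variable {α : Type*} [MeasurableSpace α] {μ : Measure α} {ρ σ : ℝ} {g : α → ℝ}

theorem eLpNorm_dualPow (hρσ : ρ.HolderConjugate σ) (g : α → ℝ) :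
    eLpNorm (fun t => dualPow ρ (g t)) (ENNReal.ofReal σ) μ =
      eLpNorm g (ENNReal.ofReal ρ) μ ^ (ρ - 1) := by
  calc eLpNorm (fun t => dualPow ρ (g t)) (ENNReal.ofReal σ) μ
      = eLpNorm (fun t => ‖g t‖ ^ (ρ - 1)) (ENNReal.ofReal σ) μ :=
        eLpNorm_congr_norm_ae <| ae_of_all _ fun t => by
          rw [Real.norm_eq_abs, abs_dualPow hρσ.lt.ne',
            Real.norm_of_nonneg (by positivity : (0 : ℝ) ≤ ‖g t‖ ^ (ρ - 1)), Real.norm_eq_abs]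
    _ = eLpNorm g (ENNReal.ofReal ρ) μ ^ (ρ - 1) := by
        rw [eLpNorm_norm_rpow g hρσ.sub_one_pos, ← ENNReal.ofReal_mul hρσ.symm.nonneg,
          mul_comm, hρσ.sub_one_mul_conj]

theorem memLp_dualPow (hρσ : ρ.HolderConjugate σ) (hg : MemLp g (ENNReal.ofReal ρ) μ) :
    MemLp (fun t => dualPow ρ (g t)) (ENNReal.ofReal σ) μ :=
  ⟨((measurable_dualPow ρ).comp_aemeasurable hg.1.aemeasurable).aestronglyMeasurable, by
    rw [eLpNorm_dualPow hρσ]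
    exact ENNReal.rpow_lt_top_of_nonneg hρσ.sub_one_pos.le hg.2.ne⟩

theorem integral_mul_dualPow (hρ : 0 < ρ) (hg : MemLp g (ENNReal.ofReal ρ) μ) :
    ∫ t, g t * dualPow ρ (g t) ∂μ = (eLpNorm g (ENNReal.ofReal ρ) μ).toReal ^ ρ := by
  rw [hg.eLpNorm_eq_integral_rpow_norm (by simpa using hρ) ofReal_ne_top,
    ENNReal.toReal_ofReal (by positivity), ENNReal.toReal_ofReal hρ.le,
    ← Real.rpow_mul (integral_nonneg fun t => by positivity), inv_mul_cancel₀ hρ.ne',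
    Real.rpow_one]
  simp only [mul_dualPow hρ.ne', Real.norm_eq_abs]

theorem eLpNorm_sub_integral_le [IsProbabilityMeasure μ] {p : ℝ≥0∞} (hp : 1 ≤ p) {f : α → ℝ}
    (hf : MemLp f p μ) : eLpNorm (fun t => f t - ∫ s, f s ∂μ) p μ ≤ 2 * eLpNorm f p μ := by
  have hmean : eLpNorm (fun _ => ∫ s, f s ∂μ) p μ ≤ eLpNorm f p μ := calc
    eLpNorm (fun _ => ∫ s, f s ∂μ) p μ = ‖∫ s, f s ∂μ‖ₑ := by
      rw [eLpNorm_const _ (one_pos.trans_le hp).ne' (IsProbabilityMeasure.ne_zero μ),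
        measure_univ, one_rpow, mul_one]
    _ ≤ eLpNorm f 1 μ := by
      rw [eLpNorm_one_eq_lintegral_enorm]; exact enorm_integral_le_lintegral_enorm f
    _ ≤ eLpNorm f p μ := eLpNorm_le_eLpNorm_of_exponent_le hp hf.1
  calc eLpNorm (fun t => f t - ∫ s, f s ∂μ) p μ
      ≤ eLpNorm f p μ + eLpNorm (fun _ => ∫ s, f s ∂μ) p μ :=
        eLpNorm_sub_le hf.1 aestronglyMeasurable_const hp
    _ ≤ 2 * eLpNorm f p μ := by rw [two_mul]; gcongr

theorem ofReal_half_mul_eLpNorm_le_iSup_integral_mul_div [IsProbabilityMeasure μ]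
    (hρσ : ρ.HolderConjugate σ) (hg : MemLp g (ENNReal.ofReal ρ) μ) (hg_mean : ∫ t, g t ∂μ = 0) :
    ENNReal.ofReal (1 / 2) * eLpNorm g (ENNReal.ofReal ρ) μ ≤
      ⨆ (h : α → ℝ) (_ : MemLp h (ENNReal.ofReal σ) μ) (_ : ∫ t, h t ∂μ = 0)
        (_ : ¬ h =ᵐ[μ] 0),
        ENNReal.ofReal (∫ t, g t * h t ∂μ) / eLpNorm h (ENNReal.ofReal σ) μ := by
  set N := eLpNorm g (ENNReal.ofReal ρ) μ
  rcases eq_or_ne N 0 with hN | hN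
  · simp [hN]
  have hNtop : N ≠ ∞ := hg.2.ne
  have hρ : 0 < ρ := hρσ.pos
  have := hρσ.ennrealOfReal
  set h₀ := fun t => dualPow ρ (g t)
  set c := ∫ s, h₀ s ∂μ
  have hh₀ : MemLp h₀ (ENNReal.ofReal σ) μ := memLp_dualPow hρσ hg
  have h_pairing : ∫ t, g t * (h₀ t - c) ∂μ = N.toReal ^ ρ := by
    simp only [mul_sub]
    rw [integral_sub (f := fun t => g t * h₀ t) (hg.integrable_mul hh₀)
        ((hg.integrable (one_le_ofReal.2 hρσ.lt.le)).mul_const c),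
      integral_mul_dualPow hρ hg, integral_mul_const, hg_mean, zero_mul, sub_zero]
  have h_pos : 0 < N.toReal ^ ρ := Real.rpow_pos_of_pos (ENNReal.toReal_pos hN hNtop) ρ
  have h_mean : ∫ t, h₀ t - c ∂μ = 0 := by
    rw [integral_sub (hh₀.integrable (one_le_ofReal.2 hρσ.symm.lt.le)) (integrable_const c),
      integral_const, probReal_univ, one_smul, sub_self]
  have h_ne : ¬ (fun t => h₀ t - c) =ᵐ[μ] 0 := fun h0 => by
    have : ∫ t, g t * (h₀ t - c) ∂μ = 0 :=
      integral_eq_zero_of_ae (h0.mono fun t ht => by simp [ht])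
    exact h_pos.ne' (h_pairing ▸ this)
  have h_norm : eLpNorm (fun t => h₀ t - c) (ENNReal.ofReal σ) μ ≤ 2 * N ^ (ρ - 1) :=
    (eLpNorm_sub_integral_le (one_le_ofReal.2 hρσ.symm.lt.le) hh₀).trans_eq
      (by rw [eLpNorm_dualPow hρσ])
  refine le_iSup₂_of_le (fun t => h₀ t - c) (hh₀.sub (memLp_const c))
    (le_iSup₂_of_le h_mean h_ne ?_)
  calc ENNReal.ofReal (1 / 2) * N = N ^ ρ / (2 * N ^ (ρ - 1)) :=
        ofReal_half_mul_eq_rpow_div hN hNtop ρ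
    _ = ENNReal.ofReal (N.toReal ^ ρ) / (2 * N ^ (ρ - 1)) := by
        rw [← ENNReal.ofReal_rpow_of_pos (ENNReal.toReal_pos hN hNtop), ofReal_toReal hNtop]
    _ ≤ _ := by rw [h_pairing]; exact ENNReal.div_le_div_left h_norm _

end

-- `v ∈ W₀^{1,σ}(0,1)` is encoded by its derivative `h`, which ranges over the mean-zero `L^σ` functions.
/-- Let `1 < ρ < ∞`, `σ = ρ/(ρ-1)` and `I = (0,1)`.  A function
`w ∈ W₀^{1,ρ}(I)` is represented by its derivative `g ∈ L^ρ(I)` via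
`w(x) = ∫₀ˣ g` (so `w(0) = 0`), together with `w(1) = 0`; likewise nonzero
`v ∈ W₀^{1,σ}(I)` are represented by their derivatives `h ∈ L^σ(I)` with mean zero.
Then `sup_{0 ≠ v ∈ W₀^{1,σ}} ⟨w', v'⟩ / ‖v'‖_{L^σ} ≥ (1/2) ‖w'‖_{L^ρ}`: the 1-D Laplace
operator from `W₀^{1,ρ}(0,1)` to the dual of `W₀^{1,σ}(0,1)` is bounded below by `1/2`. -/
theorem stmt17 (ρ σ : ℝ) (hρ : 1 < ρ) (hσ : σ = ρ / (ρ - 1))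
    (w g : ℝ → ℝ)
    (hg : MemLp g (ENNReal.ofReal ρ) (volume.restrict (Set.Ioo (0:ℝ) 1)))
    (hw : ∀ x : ℝ, w x = ∫ t in Set.Ioc (0:ℝ) x, g t)
    (hw1 : w 1 = 0) :
    ENNReal.ofReal (1 / 2) * eLpNorm g (ENNReal.ofReal ρ) (volume.restrict (Set.Ioo (0:ℝ) 1)) ≤
      ⨆ (h : ℝ → ℝ)
        (_ : MemLp h (ENNReal.ofReal σ) (volume.restrict (Set.Ioo (0:ℝ) 1)))
        (_ : ∫ t in Set.Ioo (0:ℝ) 1, h t = 0) (_ : ¬ h =ᵐ[volume.restrict (Set.Ioo (0:ℝ) 1)] 0),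
        ENNReal.ofReal (∫ t in Set.Ioo (0:ℝ) 1, g t * h t) /
          eLpNorm h (ENNReal.ofReal σ) (volume.restrict (Set.Ioo (0:ℝ) 1)) := by
  have : IsProbabilityMeasure (volume.restrict (Set.Ioo (0:ℝ) 1)) := ⟨by simp⟩
  refine ofReal_half_mul_eLpNorm_le_iSup_integral_mul_div
    ((Real.holderConjugate_iff_eq_conjExponent hρ).2 hσ) hg ?_
  rw [← integral_Ioc_eq_integral_Ioo, ← hw 1, hw1]
end
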